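/- For a Hermiticity-preserving, trace-preserving linear map L on M_d(ℂ), the contraction coefficient satisfies τ(L) = (1/2)·sup over pairs of orthonormal vectors φ ⊥ ψ in ℂ^d of ‖L(|φ⟩⟨φ|) − L(|ψ⟩⟨ψ|)‖₁. -/

import Mathlib

open Matrix Filter
open scoped ComplexOrder

/-- Trace norm (Schatten 1-norm) of a complex matrix: `tr √(XᴴX)`. -/
noncomputable def traceNorm {d : ℕ} (X : Matrix (Fin d) (Fin d) ℂ) : ℝ :=
  (((Matrix.posSemidef_conjTranspose_mul_self X).1.eigenvectorUnitary : Matrix (Fin d) (Fin d) ℂ) *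
    Matrix.diagonal ((fun x : ℝ => ((Real.sqrt x : ℝ) : ℂ)) ∘ (Matrix.posSemidef_conjTranspose_mul_self X).1.eigenvalues) *
    (star (Matrix.posSemidef_conjTranspose_mul_self X).1.eigenvectorUnitary : Matrix (Fin d) (Fin d) ℂ)).trace.re

/-- Linear endomorphisms of `M_d(ℂ)` (superoperators). -/
abbrev MatEnd (d : ℕ) := Module.End ℂ (Matrix (Fin d) (Fin d) ℂ)

/-- Trace-preserving map. -/
def IsTP {d : ℕ} (T : MatEnd d) : Prop := ∀ X, (T X).trace = X.trace

/-- Positive map: maps PSD matrices to PSD matrices. -/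
def IsPos {d : ℕ} (T : MatEnd d) : Prop := ∀ X, X.PosSemidef → (T X).PosSemidef

/-- Hermiticity-preserving map. -/
def IsHP {d : ℕ} (T : MatEnd d) : Prop := ∀ X, (T X)ᴴ = T Xᴴ

/-- Induced 1→1 norm: `sup_{X ≠ 0} ‖T X‖₁ / ‖X‖₁`. -/
noncomputable def norm1to1 {d : ℕ} (T : MatEnd d) : ℝ :=
  sSup {r | ∃ X, X ≠ 0 ∧ r = traceNorm (T X) / traceNorm X}

/-- Trace-norm contraction coefficient: sup over nonzero Hermitian traceless `σ`. -/
noncomputable def tau {d : ℕ} (T : MatEnd d) : ℝ :=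
  sSup {r | ∃ σ : Matrix (Fin d) (Fin d) ℂ,
    σ.IsHermitian ∧ σ.trace = 0 ∧ σ ≠ 0 ∧ r = traceNorm (T σ) / traceNorm σ}

/-- Density matrix: positive semidefinite with unit trace. -/
def IsDensity {d : ℕ} (ρ : Matrix (Fin d) (Fin d) ℂ) : Prop := ρ.PosSemidef ∧ ρ.trace = 1

/-- `Tinf` is the Cesàro-mean fixed point projection of `T`. -/
def IsCesaroProj {d : ℕ} (T Tinf : MatEnd d) : Prop :=
  ∀ X, Tendsto (fun n : ℕ => (n : ℂ)⁻¹ • ∑ k ∈ Finset.range n, (T ^ (k + 1)) X)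
    atTop (nhds (Tinf X))

/-!
Write a traceless Hermitian `σ` as `∑ λᵢ Eᵢ` with `Eᵢ = |uᵢ⟩⟨uᵢ|` for an orthonormal eigenbasis and
put `t = ∑ λᵢ⁺ = ∑ λᵢ⁻`, so that `‖σ‖₁ = 2t` and `t • σ = ∑ᵢⱼ λᵢ⁺ λⱼ⁻ • (Eᵢ - Eⱼ)`. Convexity of the
trace norm on Hermitian matrices bounds `‖L σ‖₁ / ‖σ‖₁` by half a weighted average of the numbers
`‖L (Eᵢ - Eⱼ)‖₁` over pairs with `λᵢ > 0 > λⱼ`, hence by half of one of them. Conversely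
`|φ⟩⟨φ| - |ψ⟩⟨ψ|` is traceless Hermitian of trace norm `2`. Each of the two sets is thus dominated
elementwise by the other, so their suprema agree, bounded or not. Convexity itself comes from
`‖H‖₁ = max_U ∑ᵢ |(U⋆ H U)ᵢᵢ|` over unitaries `U`, a consequence of `H = H⁺ - H⁻` and
`|H| = H⁺ + H⁻`.
-/

open scoped MatrixOrder

lemma sum_negPart_eq_sum_posPart {ι : Type*} (s : Finset ι) {μ : ι → ℝ}
    (hμ : ∑ i ∈ s, μ i = 0) : ∑ i ∈ s, (μ i)⁻ = ∑ i ∈ s, (μ i)⁺ := by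
  rw [← sub_eq_zero, ← neg_eq_zero, neg_sub, ← Finset.sum_sub_distrib, ← hμ]
  simp [posPart_sub_negPart]

lemma sum_posPart_smul_sum_smul_eq {ι M : Type*} [Fintype ι] [AddCommGroup M] [Module ℝ M]
    {μ : ι → ℝ} (hμ : ∑ i, μ i = 0) (E : ι → M) :
    (∑ i, (μ i)⁺) • ∑ i, μ i • E i = ∑ p : ι × ι, ((μ p.1)⁺ * (μ p.2)⁻) • (E p.1 - E p.2) := by
  have hpos : ∑ p : ι × ι, ((μ p.1)⁺ * (μ p.2)⁻) • E p.1 = (∑ i, (μ i)⁺) • ∑ i, (μ i)⁺ • E i := by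
    rw [Fintype.sum_prod_type, ← sum_negPart_eq_sum_posPart _ hμ, Finset.smul_sum]
    simp [mul_comm, mul_smul, Finset.sum_smul]
  have hneg : ∑ p : ι × ι, ((μ p.1)⁺ * (μ p.2)⁻) • E p.2 = (∑ i, (μ i)⁺) • ∑ i, (μ i)⁻ • E i := by
    rw [Fintype.sum_prod_type, Finset.sum_comm, Finset.smul_sum]
    simp [mul_smul, Finset.sum_smul]
  simp_rw [smul_sub]
  rw [Finset.sum_sub_distrib, hpos, hneg, ← smul_sub, ← Finset.sum_sub_distrib]
  simp_rw [← sub_smul, posPart_sub_negPart]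

lemma exists_ne_zero_and_le_of_sum_mul_le {ι : Type*} [Fintype ι] {w a : ι → ℝ} {x : ℝ}
    (hw : ∀ i, 0 ≤ w i) (hw₀ : ∃ i, w i ≠ 0) (h : ∑ i, w i * x ≤ ∑ i, w i * a i) :
    ∃ i, w i ≠ 0 ∧ x ≤ a i := by
  by_contra! hlt
  obtain ⟨i₀, hi₀⟩ := hw₀
  refine h.not_gt (Finset.sum_lt_sum (fun i _ => ?_) ⟨i₀, Finset.mem_univ _, ?_⟩)
  · rcases eq_or_ne (w i) 0 with hi | hi
    · simp [hi]
    · exact mul_le_mul_of_nonneg_left (hlt i hi).le (hw i)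
  · exact mul_lt_mul_of_pos_left (hlt i₀ hi₀) ((hw i₀).lt_of_ne' hi₀)

lemma Complex.norm_sub_le_re_add {a b : ℂ} (ha : 0 ≤ a) (hb : 0 ≤ b) : ‖a - b‖ ≤ (a + b).re := by
  obtain ⟨ha, ha'⟩ := Complex.nonneg_iff.1 ha
  obtain ⟨hb, hb'⟩ := Complex.nonneg_iff.1 hb
  rw [← Complex.re_add_im a, ← Complex.re_add_im b, ← ha', ← hb']
  simp only [Complex.ofReal_zero, zero_mul, add_zero, ← Complex.ofReal_sub, Complex.norm_real,
    Real.norm_eq_abs, ← Complex.ofReal_add, Complex.ofReal_re]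
  rw [abs_le]
  constructor <;> linarith

namespace Matrix

variable {n 𝕜 : Type*} [Fintype n] [DecidableEq n] [RCLike 𝕜]

lemma trace_star_mul_mul_of_mem_unitary {U : Matrix n n 𝕜} (hU : U ∈ unitary (Matrix n n 𝕜))
    (A : Matrix n n 𝕜) : (star U * A * U).trace = A.trace := by
  rw [trace_mul_cycle, Unitary.mul_star_self_of_mem hU, one_mul]

lemma IsHermitian.eq_sum_eigenvalues_smul_vecMulVec {A : Matrix n n 𝕜} (hA : A.IsHermitian) :
    A = ∑ i, hA.eigenvalues i •
      vecMulVec ⇑(hA.eigenvectorBasis i) (star ⇑(hA.eigenvectorBasis i)) := by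
  conv_lhs => rw [hA.spectral_theorem, Unitary.conjStarAlgAut_apply]
  ext a b
  simp [mul_apply, diagonal_apply, Matrix.sum_apply, vecMulVec_apply, RCLike.real_smul_eq_coe_mul]
  exact Finset.sum_congr rfl fun j _ => by ring

lemma IsHermitian.star_eigenvectorBasis_dotProduct {A : Matrix n n 𝕜} (hA : A.IsHermitian)
    (i j : n) :
    star ⇑(hA.eigenvectorBasis i) ⬝ᵥ ⇑(hA.eigenvectorBasis j) = if i = j then 1 else 0 := by
  rw [dotProduct_comm, ← EuclideanSpace.inner_eq_star_dotProduct]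
  exact orthonormal_iff_ite.1 hA.eigenvectorBasis.orthonormal i j

lemma IsHermitian.sum_eigenvalues_eq_zero {A : Matrix n n 𝕜} (hA : A.IsHermitian)
    (htr : A.trace = 0) : ∑ i, hA.eigenvalues i = 0 := by
  have h := hA.trace_eq_sum_eigenvalues
  rwa [htr, ← RCLike.ofReal_sum, eq_comm, RCLike.ofReal_eq_zero] at h

end Matrix

variable {d : ℕ}

lemma traceNorm_eq_re_trace_abs (X : Matrix (Fin d) (Fin d) ℂ) :
    traceNorm X = (CFC.abs X).trace.re := by
  have hX := posSemidef_conjTranspose_mul_self X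
  have : 0 ≤ Xᴴ * X := hX.nonneg
  rw [CFC.abs, CFC.sqrt_eq_cfc, star_eq_conjTranspose, cfc_nnreal_eq_real _ (Xᴴ * X), hX.1.cfc_eq,
    IsHermitian.cfc, Unitary.conjStarAlgAut_apply]
  unfold traceNorm Real.sqrt
  rfl

lemma traceNorm_zero : traceNorm (0 : Matrix (Fin d) (Fin d) ℂ) = 0 := by
  simp [traceNorm_eq_re_trace_abs]

lemma traceNorm_smul (c : ℝ) (X : Matrix (Fin d) (Fin d) ℂ) :
    traceNorm (c • X) = |c| * traceNorm X := by
  simp [traceNorm_eq_re_trace_abs]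

lemma traceNorm_eq_sum_abs_eigenvalues {H : Matrix (Fin d) (Fin d) ℂ} (hH : H.IsHermitian) :
    traceNorm H = ∑ i, |hH.eigenvalues i| := by
  rw [traceNorm_eq_re_trace_abs, CFC.abs_eq_cfc_norm H hH.isSelfAdjoint, hH.cfc_eq,
    IsHermitian.cfc, Unitary.conjStarAlgAut_apply, trace_mul_cycle, Unitary.coe_star_mul_self,
    one_mul, trace_diagonal]
  simp

lemma traceNorm_pos {H : Matrix (Fin d) (Fin d) ℂ} (hH : H.IsHermitian) (hne : H ≠ 0) :
    0 < traceNorm H := by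
  rw [traceNorm_eq_sum_abs_eigenvalues hH]
  refine (Finset.sum_nonneg fun i _ => abs_nonneg _).lt_of_ne fun h => hne ?_
  refine hH.eigenvalues_eq_zero_iff.1 (funext fun i => abs_eq_zero.1 ?_)
  exact (Finset.sum_eq_zero_iff_of_nonneg fun i _ => abs_nonneg _).1 h.symm i (Finset.mem_univ i)

lemma traceNorm_eq_two_mul_sum_posPart_eigenvalues {σ : Matrix (Fin d) (Fin d) ℂ}
    (hσ : σ.IsHermitian) (htr : σ.trace = 0) :
    traceNorm σ = 2 * ∑ i, (hσ.eigenvalues i)⁺ := by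
  rw [traceNorm_eq_sum_abs_eigenvalues hσ]
  simp_rw [← posPart_add_negPart]
  rw [Finset.sum_add_distrib, sum_negPart_eq_sum_posPart _ (hσ.sum_eigenvalues_eq_zero htr)]
  ring

lemma sum_norm_diag_conj_le_traceNorm {H : Matrix (Fin d) (Fin d) ℂ} (hH : H.IsHermitian)
    {U : Matrix (Fin d) (Fin d) ℂ} (hU : U ∈ unitary (Matrix (Fin d) (Fin d) ℂ)) :
    ∑ i, ‖(star U * H * U) i i‖ ≤ traceNorm H := by
  have hdiag : ∀ {P : Matrix (Fin d) (Fin d) ℂ}, 0 ≤ P → ∀ i, 0 ≤ (star U * P * U) i i :=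
    fun hP i => ((nonneg_iff_posSemidef.1 hP).conjTranspose_mul_mul_same U).diag_nonneg
  calc ∑ i, ‖(star U * H * U) i i‖
      = ∑ i, ‖(star U * H⁺ * U) i i - (star U * H⁻ * U) i i‖ := by
        conv_lhs => rw [← CFC.posPart_sub_negPart H hH.isSelfAdjoint]
        simp only [mul_sub, sub_mul, Matrix.sub_apply]
    _ ≤ ∑ i, ((star U * H⁺ * U) i i + (star U * H⁻ * U) i i).re :=
        Finset.sum_le_sum fun i _ => Complex.norm_sub_le_re_add
          (hdiag (CFC.posPart_nonneg H) i) (hdiag (CFC.negPart_nonneg H) i)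
    _ = traceNorm H := by
        rw [traceNorm_eq_re_trace_abs, ← CFC.posPart_add_negPart H hH.isSelfAdjoint,
          ← trace_star_mul_mul_of_mem_unitary hU, trace, Complex.re_sum]
        simp only [mul_add, add_mul, Matrix.add_apply, diag_apply]

lemma sum_norm_diag_conj_eigenvectorUnitary_eq_traceNorm {H : Matrix (Fin d) (Fin d) ℂ}
    (hH : H.IsHermitian) :
    ∑ i, ‖(star (hH.eigenvectorUnitary : Matrix (Fin d) (Fin d) ℂ) * H *
      hH.eigenvectorUnitary) i i‖ = traceNorm H := by
  have h := hH.conjStarAlgAut_star_eigenvectorUnitary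
  rw [Unitary.conjStarAlgAut_apply, Unitary.coe_star, star_star] at h
  simp [h, traceNorm_eq_sum_abs_eigenvalues hH]

lemma traceNorm_sum_smul_le {ι : Type*} (s : Finset ι) {w : ι → ℝ} (hw : ∀ i ∈ s, 0 ≤ w i)
    {X : ι → Matrix (Fin d) (Fin d) ℂ} (hX : ∀ i ∈ s, (X i).IsHermitian) :
    traceNorm (∑ i ∈ s, w i • X i) ≤ ∑ i ∈ s, w i * traceNorm (X i) := by
  have hH : (∑ i ∈ s, w i • X i).IsHermitian :=
    isSelfAdjoint_sum s fun i hi => (IsSelfAdjoint.all (w i)).smul (hX i hi).isSelfAdjoint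
  set U := (hH.eigenvectorUnitary : Matrix (Fin d) (Fin d) ℂ)
  calc traceNorm (∑ i ∈ s, w i • X i)
      = ∑ k, ‖∑ i ∈ s, w i • (star U * X i * U) k k‖ := by
        rw [← sum_norm_diag_conj_eigenvectorUnitary_eq_traceNorm hH]
        simp [U, Finset.mul_sum, Finset.sum_mul, Matrix.sum_apply]
    _ ≤ ∑ k, ∑ i ∈ s, w i * ‖(star U * X i * U) k k‖ := by
        gcongr with k
        refine (norm_sum_le _ _).trans (Finset.sum_le_sum fun i hi => ?_)
        rw [norm_smul, Real.norm_of_nonneg (hw i hi)]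
    _ = ∑ i ∈ s, w i * ∑ k, ‖(star U * X i * U) k k‖ := by
        rw [Finset.sum_comm]
        simp [Finset.mul_sum]
    _ ≤ ∑ i ∈ s, w i * traceNorm (X i) := by
        gcongr with i hi
        · exact hw i hi
        · exact sum_norm_diag_conj_le_traceNorm (hX i hi) hH.eigenvectorUnitary.2

lemma traceNorm_vecMulVec_sub_vecMulVec {φ ψ : Fin d → ℂ} (hφ : star φ ⬝ᵥ φ = 1)
    (hψ : star ψ ⬝ᵥ ψ = 1) (hφψ : star φ ⬝ᵥ ψ = 0) :
    traceNorm (vecMulVec φ (star φ) - vecMulVec ψ (star ψ)) = 2 := by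
  have hψφ : star ψ ⬝ᵥ φ = 0 := by rw [star_dotProduct, hφψ, star_zero]
  have hprod (u v : Fin d → ℂ) :
      vecMulVec u (star u) * vecMulVec v (star v) = (star u ⬝ᵥ v) • vecMulVec u (star v) := by
    rw [vecMulVec_mul_vecMulVec, vecMulVec_smul]
  -- the projections are orthogonal, so `(P + Q)² = (P - Q)²`
  have habs : CFC.abs (vecMulVec φ (star φ) - vecMulVec ψ (star ψ)) =
      vecMulVec φ (star φ) + vecMulVec ψ (star ψ) := by
    refine CFC.sqrt_unique ?_ (nonneg_iff_posSemidef.2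
      ((posSemidef_vecMulVec_self_star φ).add (posSemidef_vecMulVec_self_star ψ)))
    rw [star_sub, star_eq_conjTranspose, star_eq_conjTranspose,
      (posSemidef_vecMulVec_self_star φ).1.eq, (posSemidef_vecMulVec_self_star ψ).1.eq]
    simp only [add_mul, mul_add, sub_mul, mul_sub, hprod, hφ, hψ, hφψ, hψφ, one_smul, zero_smul]
    abel
  rw [traceNorm_eq_re_trace_abs, habs, trace_add, trace_vecMulVec, trace_vecMulVec,
    dotProduct_comm, hφ, dotProduct_comm, hψ]
  norm_num

lemma IsHP.isHermitian_apply {L : MatEnd d} (hL : IsHP L) {X : Matrix (Fin d) (Fin d) ℂ}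
    (hX : X.IsHermitian) : (L X).IsHermitian :=
  (hL X).trans (congrArg L hX)

lemma IsHP.exists_orthonormal_div_traceNorm_le {L : MatEnd d} (hL : IsHP L)
    {σ : Matrix (Fin d) (Fin d) ℂ} (hσ : σ.IsHermitian) (htr : σ.trace = 0) (hne : σ ≠ 0) :
    ∃ φ ψ : Fin d → ℂ, star φ ⬝ᵥ φ = 1 ∧ star ψ ⬝ᵥ ψ = 1 ∧ star φ ⬝ᵥ ψ = 0 ∧
      traceNorm (L σ) / traceNorm σ ≤
        traceNorm (L (vecMulVec φ (star φ)) - L (vecMulVec ψ (star ψ))) / 2 := by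
  set μ := hσ.eigenvalues
  set u : Fin d → Fin d → ℂ := fun i => ⇑(hσ.eigenvectorBasis i)
  set E : Fin d → Matrix (Fin d) (Fin d) ℂ := fun i => vecMulVec (u i) (star (u i))
  set t := ∑ i, (μ i)⁺
  set w : Fin d × Fin d → ℝ := fun p => (μ p.1)⁺ * (μ p.2)⁻
  have hnorm : traceNorm σ = 2 * t := traceNorm_eq_two_mul_sum_posPart_eigenvalues hσ htr
  have ht : 0 < t := by linarith [traceNorm_pos hσ hne]
  have hw : ∀ p, 0 ≤ w p := fun p => mul_nonneg (posPart_nonneg _) (negPart_nonneg _)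
  have hsum_w : ∑ p, w p = t * t := by
    simp only [w, Fintype.sum_prod_type, ← Finset.mul_sum, ← Finset.sum_mul]
    rw [sum_negPart_eq_sum_posPart _ (hσ.sum_eigenvalues_eq_zero htr)]
  have hbound : t * traceNorm (L σ) ≤ ∑ p, w p * traceNorm (L (E p.1 - E p.2)) := by
    have hdecomp : t • σ = ∑ p, w p • (E p.1 - E p.2) := by
      conv_lhs => rw [hσ.eq_sum_eigenvalues_smul_vecMulVec]
      exact sum_posPart_smul_sum_smul_eq (hσ.sum_eigenvalues_eq_zero htr) E
    calc t * traceNorm (L σ) = traceNorm (∑ p, w p • L (E p.1 - E p.2)) := by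
          rw [← abs_of_pos ht, ← traceNorm_smul, ← LinearMap.map_smul_of_tower, hdecomp, map_sum]
          simp only [LinearMap.map_smul_of_tower]
      _ ≤ ∑ p, w p * traceNorm (L (E p.1 - E p.2)) :=
          traceNorm_sum_smul_le _ (fun p _ => hw p) fun p _ => hL.isHermitian_apply
            ((posSemidef_vecMulVec_self_star _).1.sub (posSemidef_vecMulVec_self_star _).1)
  obtain ⟨⟨i, j⟩, hij, hle⟩ := exists_ne_zero_and_le_of_sum_mul_le
    (a := fun p => traceNorm (L (E p.1 - E p.2))) (x := traceNorm (L σ) / t) hw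
    (Finset.exists_ne_zero_of_sum_ne_zero (by rw [hsum_w]; positivity) |>.imp fun _ h => h.2)
    (by rw [← Finset.sum_mul, hsum_w, mul_assoc, mul_div_cancel₀ _ ht.ne']; exact hbound)
  have hi : 0 < μ i := posPart_pos_iff.1 ((posPart_nonneg _).lt_of_ne' (left_ne_zero_of_mul hij))
  have hj : μ j < 0 := negPart_pos_iff.1 ((negPart_nonneg _).lt_of_ne' (right_ne_zero_of_mul hij))
  refine ⟨u i, u j, ?_, ?_, ?_, ?_⟩
  · simpa using hσ.star_eigenvectorBasis_dotProduct i i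
  · simpa using hσ.star_eigenvectorBasis_dotProduct j j
  · simpa [ne_of_apply_ne μ (hj.trans hi).ne'] using hσ.star_eigenvectorBasis_dotProduct i j
  · rw [hnorm, ← map_sub, mul_comm, ← div_div]
    exact div_le_div_of_nonneg_right hle zero_le_two

theorem tau_eq_sup_orthonormal_general {d : ℕ} (L : MatEnd d) (hHP : IsHP L) :
    tau L = (1 / 2) * sSup {r | ∃ φ ψ : Fin d → ℂ,
      (∑ i, star (φ i) * φ i) = 1 ∧ (∑ i, star (ψ i) * ψ i) = 1 ∧
      (∑ i, star (φ i) * ψ i) = 0 ∧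
      r = traceNorm (L (Matrix.vecMulVec φ (star φ)) - L (Matrix.vecMulVec ψ (star ψ)))} := by
  rw [tau, ← smul_eq_mul, ← Real.sSup_smul_of_nonneg (by norm_num)]
  refine csSup_eq_csSup_of_forall_exists_le ?_ ?_
  · rintro _ ⟨σ, hσ, htr, hne, rfl⟩
    obtain ⟨φ, ψ, hφ, hψ, hφψ, hle⟩ := hHP.exists_orthonormal_div_traceNorm_le hσ htr hne
    exact ⟨_, Set.smul_mem_smul_set ⟨φ, ψ, hφ, hψ, hφψ, rfl⟩,
      by rwa [smul_eq_mul, one_div_mul_eq_div]⟩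
  · rintro _ ⟨_, ⟨φ, ψ, hφ, hψ, hφψ, rfl⟩, rfl⟩
    replace hφ : star φ ⬝ᵥ φ = 1 := hφ
    replace hψ : star ψ ⬝ᵥ ψ = 1 := hψ
    have h2 := traceNorm_vecMulVec_sub_vecMulVec hφ hψ hφψ
    refine ⟨_, ⟨_, (posSemidef_vecMulVec_self_star φ).1.sub (posSemidef_vecMulVec_self_star ψ).1,
      ?_, ?_, rfl⟩, ?_⟩
    · rw [trace_sub, trace_vecMulVec, trace_vecMulVec, dotProduct_comm, hφ, dotProduct_comm, hψ,
        sub_self]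
    · intro h
      rw [h, traceNorm_zero] at h2
      norm_num at h2
    · rw [map_sub, h2]
      exact (one_div_mul_eq_div _ _).le

/-- the contraction coefficient equals half the supremum of
`‖L(|φ⟩⟨φ|) − L(|ψ⟩⟨ψ|)‖₁` over pairs of orthonormal vectors. -/
theorem tau_eq_sup_orthonormal {d : ℕ} (L : MatEnd d) (hHP : IsHP L) (hTP : IsTP L) :
    tau L = (1 / 2) * sSup {r | ∃ φ ψ : Fin d → ℂ,
      (∑ i, star (φ i) * φ i) = 1 ∧ (∑ i, star (ψ i) * ψ i) = 1 ∧
      (∑ i, star (φ i) * ψ i) = 0 ∧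
      r = traceNorm (L (Matrix.vecMulVec φ (star φ)) - L (Matrix.vecMulVec ψ (star ψ)))} :=
  tau_eq_sup_orthonormal_general L hHP
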